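/- (A multi-class network in the feature-decoupling regime yields a robust binary classifier) Let d, k, h ≥ 1 with d ≥ 2 and 10 · ln d ≤ √d, and let μ : Fin k → ℝ^d be orthogonal equinorm cluster features with binary cluster labels s. Let the k-class network have weights w : Fin k × Fin h → ℝ^d, components f_j(x) = (1/h) Σ_{r∈Fin h} ReLU(⟨w_{j,r}, x⟩), softmax probabilities p_j(x) = exp(f_j(x)) / Σ_{l∈Fin k} exp(f_l(x)), and binary readout F^binary(x) = Σ_{j∈J₊} p_j(x) − Σ_{j∈J₋} p_j(x). Suppose there are reals ε ≥ 0 and λ ≥ 2 · ln k + 10ε + 2 such that ‖w_{j,r} − (λ/d) · μ_j‖ ≤ ε/√d for every j ∈ Fin k and r ∈ Fin h. Then the probability over (J, ξ) ~ (uniform on Fin k) ⊗ γ_d that sgn(F^binary(μ_J + ξ + ρ)) = s J holds for every perturbation ρ with ‖ρ‖ ≤ √d / 10 is at least 1 − 2k · d^{−(ln d)/2} − 2 · d^{−ln d}. -/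

import Mathlib

open MeasureTheory ProbabilityTheory Real Finset
open scoped RealInnerProductSpace

/-- The standard Gaussian measure on `ℝ^d`. -/
noncomputable def stdGaussian (d : ℕ) : Measure (EuclideanSpace ℝ (Fin d)) :=
  (Measure.pi fun _ : Fin d => gaussianReal 0 1).map (MeasurableEquiv.toLp 2 (Fin d → ℝ))

/-- The sign function: `1` on positive reals, `-1` otherwise. -/
noncomputable def sgn (z : ℝ) : ℝ := if 0 < z then 1 else -1

/-- The ReLU activation. -/
noncomputable def relu (z : ℝ) : ℝ := max z 0

/-- The `j`-th component of a `k`-class two-layer network with weights `w`. -/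
noncomputable def fClass {d k h : ℕ} (w : Fin k → Fin h → EuclideanSpace ℝ (Fin d))
    (j : Fin k) (x : EuclideanSpace ℝ (Fin d)) : ℝ :=
  (1 / h) * ∑ r : Fin h, relu ⟪w j r, x⟫

/-- The softmax probability of class `j`. -/
noncomputable def pClass {d k h : ℕ} (w : Fin k → Fin h → EuclideanSpace ℝ (Fin d))
    (j : Fin k) (x : EuclideanSpace ℝ (Fin d)) : ℝ :=
  Real.exp (fClass w j x) / ∑ l : Fin k, Real.exp (fClass w l x)

/-- The binary readout of the `k`-class network. -/
noncomputable def FbinaryClass {d k h : ℕ} (w : Fin k → Fin h → EuclideanSpace ℝ (Fin d))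
    (s : Fin k → ℝ) (x : EuclideanSpace ℝ (Fin d)) : ℝ :=
  ∑ j ∈ univ.filter (fun j => s j = 1), pClass w j x -
    ∑ j ∈ univ.filter (fun j => s j = -1), pClass w j x

/-!
On the event that `|⟪μ j, ξ⟫| ≤ √d ln d` for all `j` and `‖ξ‖² ≤ 2d`, every perturbed input
`x = μ J + ξ + ρ` has `⟪μ J, x⟫ ≥ 0.8 d` and `⟪μ j, x⟫ ≤ 0.2 d` for `j ≠ J`. Since every neuron
`w j r` is within `ε/√d` of `(λ/d) μ j` and `‖x‖ ≤ 3√d`, this gives `f_J(x) ≥ 0.8λ - 3ε` and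
`f_j(x) ≤ 0.2λ + 3ε`; the gap exceeds `ln k`, so `p_J(x) > 1/2` and the binary readout has
the sign `s J`. Each projection `⟪μ j, ξ⟫` is `N(0, d)`, so the first condition fails with
probability at most `2k d^(-ln d / 2)`, and a Chernoff bound on `exp(‖ξ‖²/4)` bounds the
failure of the second by `√2^d e^(-d/2) ≤ 2 d^(-ln d)`.
-/

open scoped NNReal

lemma gaussianPDFReal_zero_one_mul_exp_mul_sq (c x : ℝ) :
    gaussianPDFReal 0 1 x * exp (c * x ^ 2) = (√(2 * π))⁻¹ * exp (-(1 / 2 - c) * x ^ 2) := by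
  rw [gaussianPDFReal, mul_assoc, ← exp_add]
  simp only [NNReal.coe_one, mul_one, sub_zero]
  ring_nf

lemma integrable_exp_mul_sq_gaussianReal {c : ℝ} (hc : c < 1 / 2) :
    Integrable (fun x => exp (c * x ^ 2)) (gaussianReal 0 1) := by
  rw [gaussianReal_of_var_ne_zero _ one_ne_zero, integrable_withDensity_iff_integrable_smul'
    (measurable_gaussianPDF 0 1) (ae_of_all _ fun _ => gaussianPDF_lt_top)]
  simp_rw [toReal_gaussianPDF, smul_eq_mul, gaussianPDFReal_zero_one_mul_exp_mul_sq]
  exact (integrable_exp_neg_mul_sq (by linarith)).const_mul _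

lemma integral_exp_mul_sq_gaussianReal {c : ℝ} (hc : c < 1 / 2) :
    ∫ x, exp (c * x ^ 2) ∂gaussianReal 0 1 = (√(1 - 2 * c))⁻¹ := by
  rw [integral_gaussianReal_eq_integral_smul one_ne_zero]
  simp_rw [smul_eq_mul, gaussianPDFReal_zero_one_mul_exp_mul_sq]
  rw [integral_const_mul, integral_gaussian, ← sqrt_inv, ← sqrt_inv, ← sqrt_mul (by positivity)]
  congr 1
  have : 1 - 2 * c ≠ 0 := by linarith
  field_simp

lemma hasSubgaussianMGF_id_gaussianReal (v : ℝ≥0) :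
    HasSubgaussianMGF id v (gaussianReal 0 v) where
  integrable_exp_mul t := integrable_exp_mul_gaussianReal t
  mgf_le t := by simp [mgf_id_gaussianReal]

section StdGaussian

variable {E : Type*} [NormedAddCommGroup E] [InnerProductSpace ℝ E] [FiniteDimensional ℝ E]
  [MeasurableSpace E] [BorelSpace E]

lemma hasSubgaussianMGF_inner_stdGaussian (u : E) :
    HasSubgaussianMGF (fun ξ => ⟪u, ξ⟫) (‖u‖ ^ 2).toNNReal (ProbabilityTheory.stdGaussian E) := by
  have hmap : (ProbabilityTheory.stdGaussian E).map (innerSL ℝ u) =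
      gaussianReal 0 (‖u‖ ^ 2).toNNReal := by
    rw [IsGaussian.map_eq_gaussianReal, integral_strongDual_stdGaussian,
      variance_dual_stdGaussian, innerSL_apply_norm]
  have := hasSubgaussianMGF_id_gaussianReal (‖u‖ ^ 2).toNNReal
  rw [← hmap, HasSubgaussianMGF.id_map_iff (by fun_prop)] at this
  exact this

lemma stdGaussian_real_lt_abs_inner_le (u : E) {t : ℝ} (ht : 0 ≤ t) :
    (ProbabilityTheory.stdGaussian E).real {ξ | t < |⟪u, ξ⟫|} ≤
      2 * exp (-t ^ 2 / (2 * ‖u‖ ^ 2)) := by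
  have hX := hasSubgaussianMGF_inner_stdGaussian u
  have hsub : {ξ : E | t < |⟪u, ξ⟫|} ⊆ {ξ | t ≤ ⟪u, ξ⟫} ∪ {ξ | t ≤ (-fun ξ => ⟪u, ξ⟫) ξ} := by
    intro ξ hξ
    rcases lt_abs.1 (show t < |⟪u, ξ⟫| from hξ) with h | h
    · exact Or.inl h.le
    · exact Or.inr (show t ≤ -⟪u, ξ⟫ from h.le)
  calc _ ≤ _ := measureReal_mono hsub
    _ ≤ _ := measureReal_union_le _ _
    _ ≤ _ := by
      have h1 := hX.measure_ge_le ht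
      have h2 := hX.neg.measure_ge_le ht
      rw [Real.coe_toNNReal _ (by positivity)] at h1 h2
      linarith

end StdGaussian

lemma stdGaussian_eq_stdGaussian_euclideanSpace (d : ℕ) :
    stdGaussian d = ProbabilityTheory.stdGaussian (EuclideanSpace ℝ (Fin d)) :=
  map_pi_eq_stdGaussian

instance (d : ℕ) : IsProbabilityMeasure (stdGaussian d) := by
  rw [stdGaussian_eq_stdGaussian_euclideanSpace]; infer_instance

lemma exp_mul_norm_toLp_sq {d : ℕ} (c : ℝ) (x : Fin d → ℝ) :
    exp (c * ‖WithLp.toLp 2 x‖ ^ 2) = ∏ i, exp (c * x i ^ 2) := by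
  simp [EuclideanSpace.norm_sq_eq, Finset.mul_sum, exp_sum]

lemma integrable_exp_mul_norm_sq_stdGaussian (d : ℕ) {c : ℝ} (hc : c < 1 / 2) :
    Integrable (fun ξ => exp (c * ‖ξ‖ ^ 2)) (stdGaussian d) := by
  rw [_root_.stdGaussian, integrable_map_equiv]
  simp only [Function.comp_def, MeasurableEquiv.coe_toLp, exp_mul_norm_toLp_sq]
  exact Integrable.fintype_prod fun _ => integrable_exp_mul_sq_gaussianReal hc

lemma integral_exp_mul_norm_sq_stdGaussian (d : ℕ) {c : ℝ} (hc : c < 1 / 2) :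
    ∫ ξ, exp (c * ‖ξ‖ ^ 2) ∂stdGaussian d = (√(1 - 2 * c))⁻¹ ^ d := by
  rw [_root_.stdGaussian, integral_map_equiv]
  simp only [MeasurableEquiv.coe_toLp, exp_mul_norm_toLp_sq]
  rw [integral_fintype_prod_eq_pow (fun x => exp (c * x ^ 2)),
    integral_exp_mul_sq_gaussianReal hc, Fintype.card_fin]

lemma stdGaussian_real_le_norm_sq_le (d : ℕ) (a : ℝ) :
    (stdGaussian d).real {ξ | a ≤ ‖ξ‖ ^ 2} ≤ √2 ^ d * exp (-a / 4) := by
  have h := measure_ge_le_exp_mul_mgf a (by norm_num : (0 : ℝ) ≤ 1 / 4)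
    (integrable_exp_mul_norm_sq_stdGaussian d (by norm_num))
  rw [mgf, integral_exp_mul_norm_sq_stdGaussian d (by norm_num)] at h
  have h2 : (√(1 - 2 * (1 / 4) : ℝ))⁻¹ = √2 := by
    rw [← sqrt_inv]; norm_num
  rw [h2, neg_mul, mul_comm] at h
  rwa [neg_div, div_eq_inv_mul, ← one_div]

section InnerProduct

variable {E : Type*} [NormedAddCommGroup E] [InnerProductSpace ℝ E]

lemma abs_inner_sub_mul_inner_le {v u x : E} {c δ : ℝ} (hv : ‖v - c • u‖ ≤ δ) :
    |⟪v, x⟫ - c * ⟪u, x⟫| ≤ δ * ‖x‖ := by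
  rw [← real_inner_smul_left, ← inner_sub_left]
  exact (abs_real_inner_le_norm _ _).trans (mul_le_mul_of_nonneg_right hv (norm_nonneg _))

lemma abs_inner_add_add_sub_inner_le {u v ξ ρ : E} {a : ℝ} (hξ : |⟪u, ξ⟫| ≤ a) :
    |⟪u, v + ξ + ρ⟫ - ⟪u, v⟫| ≤ a + ‖u‖ * ‖ρ‖ := by
  rw [inner_add_right, inner_add_right, add_assoc, add_sub_cancel_left]
  exact (abs_add_le _ _).trans (add_le_add hξ (abs_real_inner_le_norm _ _))

end InnerProduct

lemma half_lt_exp_div_sum_exp {ι : Type*} [Fintype ι] (f : ι → ℝ) {J : ι}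
    (hgap : ∀ j ≠ J, f j + log (Fintype.card ι) ≤ f J) :
    1 / 2 < exp (f J) / ∑ j, exp (f j) := by
  classical
  set n : ℝ := (Fintype.card ι : ℝ)
  have hn : 0 < n := Nat.cast_pos.2 (Fintype.card_pos_iff.2 ⟨J⟩)
  have hle : ∀ j ∈ univ.erase J, exp (f j) ≤ exp (f J) / n := fun j hj => by
    rw [le_div_iff₀ hn, ← exp_log hn, ← exp_add]
    exact exp_le_exp.2 (hgap j (ne_of_mem_erase hj))
  have hrest : ∑ j ∈ univ.erase J, exp (f j) < exp (f J) := calc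
    _ ≤ (n - 1) * (exp (f J) / n) := by
      have := sum_le_card_nsmul _ _ _ hle
      rwa [card_erase_of_mem (mem_univ J), card_univ, nsmul_eq_mul,
        Nat.cast_sub (Fintype.card_pos_iff.2 ⟨J⟩), Nat.cast_one] at this
    _ < exp (f J) := by
      rw [mul_div_assoc', div_lt_iff₀ hn]
      nlinarith [exp_pos (f J)]
  rw [← add_sum_erase _ _ (mem_univ J), lt_div_iff₀ (by positivity)]
  linarith

section Network

variable {d k h : ℕ} (w : Fin k → Fin h → EuclideanSpace ℝ (Fin d))

lemma sgn_FbinaryClass_eq_of_half_lt_pClass {s : Fin k → ℝ} (hs : ∀ j, s j = 1 ∨ s j = -1)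
    {x : EuclideanSpace ℝ (Fin d)} {J : Fin k} (hJ : 1 / 2 < pClass w J x) :
    sgn (FbinaryClass w s x) = s J := by
  have hS : 0 < ∑ l, exp (fClass w l x) := sum_pos (fun _ _ => exp_pos _) ⟨J, mem_univ J⟩
  have hp : ∀ j, 0 ≤ pClass w j x := fun j => div_nonneg (exp_pos _).le hS.le
  have hneg : univ.filter (fun j => s j = -1) = univ.filter (fun j => ¬ s j = 1) :=
    filter_congr fun j _ => by rcases hs j with hj | hj <;> simp [hj] <;> norm_num
  have hsum : ∑ j ∈ univ.filter (fun j => s j = 1), pClass w j x +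
      ∑ j ∈ univ.filter (fun j => s j = -1), pClass w j x = 1 := by
    rw [hneg, sum_filter_add_sum_filter_not]
    simp only [pClass, ← sum_div, div_self hS.ne']
  rcases hs J with hsJ | hsJ
  · have := single_le_sum (fun j _ => hp j) (mem_filter.2 ⟨mem_univ J, hsJ⟩ :
      J ∈ univ.filter (fun j => s j = 1))
    rw [sgn, if_pos (by unfold FbinaryClass; linarith), hsJ]
  · have := single_le_sum (fun j _ => hp j) (mem_filter.2 ⟨mem_univ J, hsJ⟩ :
      J ∈ univ.filter (fun j => s j = -1))
    rw [sgn, if_neg (by unfold FbinaryClass; linarith), hsJ]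

lemma le_fClass (hh : 0 < h) {j : Fin k} {x : EuclideanSpace ℝ (Fin d)} {a : ℝ}
    (ha : ∀ r, a ≤ ⟪w j r, x⟫) : a ≤ fClass w j x := by
  have hsum := card_nsmul_le_sum univ (fun r => relu ⟪w j r, x⟫) a
    fun r _ => (ha r).trans (le_max_left _ _)
  rw [card_univ, Fintype.card_fin, nsmul_eq_mul] at hsum
  rw [fClass, one_div_mul_eq_div, le_div_iff₀ (by exact_mod_cast hh)]
  linarith

lemma fClass_le {j : Fin k} {x : EuclideanSpace ℝ (Fin d)} {b : ℝ} (hb : 0 ≤ b)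
    (hb' : ∀ r, ⟪w j r, x⟫ ≤ b) : fClass w j x ≤ b := by
  rcases Nat.eq_zero_or_pos h with rfl | hh
  · simp [fClass, hb]
  have hsum := sum_le_card_nsmul univ (fun r => relu ⟪w j r, x⟫) b
    fun r _ => max_le (hb' r) hb
  rw [card_univ, Fintype.card_fin, nsmul_eq_mul] at hsum
  rw [fClass, one_div_mul_eq_div, div_le_iff₀ (by exact_mod_cast hh)]
  linarith


lemma fClass_add_log_le_fClass (hd : 0 < d) (hh : 0 < h) {μ : Fin k → EuclideanSpace ℝ (Fin d)}
    {lam eps : ℝ} (heps : 0 ≤ eps) (hlam : log k + 6 * eps ≤ 6 / 10 * lam)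
    (hw : ∀ j r, ‖w j r - (lam / d) • μ j‖ ≤ eps / √d)
    {x : EuclideanSpace ℝ (Fin d)} (hx : ‖x‖ ≤ 3 * √d) {J : Fin k}
    (hJ : 8 / 10 * d ≤ ⟪μ J, x⟫) (hj : ∀ j ≠ J, ⟪μ j, x⟫ ≤ 2 / 10 * d) {j : Fin k} (hjJ : j ≠ J) :
    fClass w j x + log k ≤ fClass w J x := by
  have hd' : (0 : ℝ) < d := by exact_mod_cast hd
  have hlam : 0 ≤ lam := by linarith [log_natCast_nonneg k]
  have herr : ∀ j r, |⟪w j r, x⟫ - lam / d * ⟪μ j, x⟫| ≤ 3 * eps := fun j r =>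
    (abs_inner_sub_mul_inner_le (hw j r)).trans <| calc
      eps / √d * ‖x‖ ≤ eps / √d * (3 * √d) := by gcongr
      _ = 3 * eps := by field_simp
  have hlower : 8 / 10 * lam - 3 * eps ≤ fClass w J x := le_fClass w hh fun r => by
    have := mul_le_mul_of_nonneg_left hJ (div_nonneg hlam hd'.le)
    have h2 : lam / d * (8 / 10 * d) = 8 / 10 * lam := by field_simp
    linarith [(abs_le.1 (herr J r)).1]
  have hupper : fClass w j x ≤ 2 / 10 * lam + 3 * eps := fClass_le w (by positivity) fun r => by
    have := mul_le_mul_of_nonneg_left (hj j hjJ) (div_nonneg hlam hd'.le)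
    have h2 : lam / d * (2 / 10 * d) = 2 / 10 * lam := by field_simp
    linarith [(abs_le.1 (herr j r)).2]
  linarith

lemma sgn_FbinaryClass_eq_of_small_noise (hd : 0 < d) (hh : 0 < h)
    {μ : Fin k → EuclideanSpace ℝ (Fin d)} (hnorm : ∀ j, ‖μ j‖ = √d)
    (horth : ∀ i j, i ≠ j → ⟪μ i, μ j⟫ = 0) {s : Fin k → ℝ} (hs : ∀ j, s j = 1 ∨ s j = -1)
    {lam eps : ℝ} (heps : 0 ≤ eps) (hlam : log k + 6 * eps ≤ 6 / 10 * lam)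
    (hw : ∀ j r, ‖w j r - (lam / d) • μ j‖ ≤ eps / √d) {ξ : EuclideanSpace ℝ (Fin d)}
    (hξμ : ∀ j, |⟪μ j, ξ⟫| ≤ d / 10) (hξ : ‖ξ‖ ^ 2 ≤ 2 * d) (J : Fin k)
    {ρ : EuclideanSpace ℝ (Fin d)} (hρ : ‖ρ‖ ≤ √d / 10) :
    sgn (FbinaryClass w s (μ J + ξ + ρ)) = s J := by
  have hd' : (0 : ℝ) < d := by exact_mod_cast hd
  have hsq : √d * √d = d := mul_self_sqrt hd'.le
  have hξ' : ‖ξ‖ ≤ 3 / 2 * √d := by nlinarith [norm_nonneg ξ, sqrt_nonneg (d : ℝ)]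
  have hx : ‖μ J + ξ + ρ‖ ≤ 3 * √d :=
    norm_add₃_le.trans (by rw [hnorm]; linarith [sqrt_nonneg (d : ℝ)])
  have hshift : ∀ j, |⟪μ j, μ J + ξ + ρ⟫ - ⟪μ j, μ J⟫| ≤ d / 5 := fun j =>
    (abs_inner_add_add_sub_inner_le (hξμ j)).trans (by rw [hnorm]; nlinarith [sqrt_nonneg (d : ℝ)])
  have hJ : 8 / 10 * d ≤ ⟪μ J, μ J + ξ + ρ⟫ := by
    have := (abs_le.1 (hshift J)).1
    rw [real_inner_self_eq_norm_sq, hnorm, sq_sqrt hd'.le] at this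
    linarith
  have hj : ∀ j ≠ J, ⟪μ j, μ J + ξ + ρ⟫ ≤ 2 / 10 * d := fun j hjJ => by
    have := (abs_le.1 (hshift j)).2
    rw [horth j J hjJ] at this
    linarith
  have hgap : ∀ j ≠ J, fClass w j (μ J + ξ + ρ) + log (Fintype.card (Fin k)) ≤
      fClass w J (μ J + ξ + ρ) := fun j hjJ => by
    simpa using fClass_add_log_le_fClass w hd hh heps hlam hw hx hJ hj hjJ
  exact sgn_FbinaryClass_eq_of_half_lt_pClass w hs (half_lt_exp_div_sum_exp _ hgap)

end Network

lemma sqrt_two_pow_mul_exp_le {d : ℕ} (hd : 0 < d) (hlog : 10 * log d ≤ √d) :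
    √2 ^ d * exp (-(2 * d) / 4) ≤ 2 * (d : ℝ) ^ (-log d) := by
  have hd' : (0 : ℝ) < d := by exact_mod_cast hd
  have hsq : 100 * log d ^ 2 ≤ d := by
    nlinarith [sq_sqrt hd'.le, log_natCast_nonneg d]
  have hpow : √2 ^ d = exp (d * (log 2 / 2)) := by
    rw [exp_nat_mul, ← log_sqrt zero_le_two, exp_log (by positivity)]
  rw [hpow, ← exp_add, rpow_def_of_pos hd']
  have : exp (d * (log 2 / 2) + -(2 * d) / 4) ≤ exp (log d * -log d) :=
    exp_le_exp.2 (by nlinarith [log_two_lt_d9])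
  linarith [exp_pos (log d * -log d)]

def typicalNoise {d k : ℕ} (μ : Fin k → EuclideanSpace ℝ (Fin d)) :
    Set (EuclideanSpace ℝ (Fin d)) :=
  {ξ | (∀ j, |⟪μ j, ξ⟫| ≤ √d * log d) ∧ ‖ξ‖ ^ 2 ≤ 2 * d}

lemma one_sub_le_stdGaussian_real_typicalNoise {d k : ℕ} (hd : 0 < d) (hlog : 10 * log d ≤ √d)
    (μ : Fin k → EuclideanSpace ℝ (Fin d)) (hnorm : ∀ j, ‖μ j‖ = √d) :
    1 - 2 * k * (d : ℝ) ^ (-(log d) / 2) - 2 * (d : ℝ) ^ (-(log d)) ≤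
      (stdGaussian d).real (typicalNoise μ) := by
  have hd' : (0 : ℝ) < d := by exact_mod_cast hd
  set t := √d * log d
  have hlin : ∀ j, (stdGaussian d).real {ξ | t < |⟪μ j, ξ⟫|} ≤ 2 * (d : ℝ) ^ (-(log d) / 2) :=
    fun j => by
      rw [stdGaussian_eq_stdGaussian_euclideanSpace]
      refine (stdGaussian_real_lt_abs_inner_le (μ j)
        (mul_nonneg (sqrt_nonneg _) (log_natCast_nonneg d))).trans_eq ?_
      rw [hnorm, rpow_def_of_pos hd', mul_pow, sq_sqrt hd'.le]
      congr 2
      field_simp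
  have hsub : {ξ : EuclideanSpace ℝ (Fin d) | 2 * d < ‖ξ‖ ^ 2} ⊆ {ξ | 2 * d ≤ ‖ξ‖ ^ 2} :=
    Set.ofPred_subset_ofPred.2 fun _ => le_of_lt
  have hsq : (stdGaussian d).real {ξ | 2 * d < ‖ξ‖ ^ 2} ≤ 2 * (d : ℝ) ^ (-(log d)) :=
    (measureReal_mono hsub).trans
      ((stdGaussian_real_le_norm_sq_le d _).trans (sqrt_two_pow_mul_exp_le hd hlog))
  set A := typicalNoise μ
  have hcompl : Aᶜ ⊆ (⋃ j, {ξ | t < |⟪μ j, ξ⟫|}) ∪ {ξ | 2 * d < ‖ξ‖ ^ 2} := by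
    intro ξ hξ
    simp only [A, typicalNoise, Set.mem_compl_iff, Set.mem_ofPred_eq, not_and_or, not_forall,
      not_le] at hξ
    simpa using hξ
  have hAc : (stdGaussian d).real Aᶜ ≤
      k * (2 * (d : ℝ) ^ (-(log d) / 2)) + 2 * (d : ℝ) ^ (-(log d)) :=
    calc (stdGaussian d).real Aᶜ
        ≤ (stdGaussian d).real (⋃ j, {ξ | t < |⟪μ j, ξ⟫|}) +
          (stdGaussian d).real {ξ | 2 * d < ‖ξ‖ ^ 2} :=
          (measureReal_mono hcompl).trans (measureReal_union_le _ _)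
      _ ≤ ∑ j, (stdGaussian d).real {ξ | t < |⟪μ j, ξ⟫|} + 2 * (d : ℝ) ^ (-(log d)) :=
          add_le_add (measureReal_iUnion_fintype_le _) hsq
      _ ≤ ∑ _j : Fin k, 2 * (d : ℝ) ^ (-(log d) / 2) + 2 * (d : ℝ) ^ (-(log d)) := by
          gcongr with j
          exact hlin j
      _ = _ := by simp
  have htotal : 1 ≤ (stdGaussian d).real A + (stdGaussian d).real Aᶜ := by
    rw [← probReal_univ (μ := stdGaussian d), ← Set.union_compl_self A]
    exact measureReal_union_le _ _
  linarith

lemma smul_count_prod_univ_prod {k : ℕ} (hk : k ≠ 0) {Ω : Type*} [MeasurableSpace Ω]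
    (ν : Measure Ω) [SFinite ν] (A : Set Ω) :
    (((k : ENNReal)⁻¹ • (Measure.count : Measure (Fin k))).prod ν) (Set.univ ×ˢ A) = ν A := by
  rw [Measure.prod_prod, Measure.smul_apply, Measure.count_univ, ENat.card_eq_coe_fintype_card,
    ENat.toENNReal_coe, Fintype.card_fin, smul_eq_mul,
    ENNReal.inv_mul_cancel (Nat.cast_ne_zero.2 hk) (ENNReal.natCast_ne_top k), one_mul]

theorem featureDecouplingRegime_robust (d k h : ℕ) (hd : 2 ≤ d) (hk : 1 ≤ k) (hh : 1 ≤ h)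
    (hlog : 10 * Real.log d ≤ Real.sqrt d)
    (μ : Fin k → EuclideanSpace ℝ (Fin d))
    (hnorm : ∀ j, ‖μ j‖ = Real.sqrt d)
    (horth : ∀ i j, i ≠ j → ⟪μ i, μ j⟫ = 0)
    (s : Fin k → ℝ) (hs : ∀ j, s j = 1 ∨ s j = -1)
    (w : Fin k → Fin h → EuclideanSpace ℝ (Fin d))
    (lam eps : ℝ) (heps : 0 ≤ eps) (hlam : 2 * Real.log k + 10 * eps + 2 ≤ lam)
    (hw : ∀ j r, ‖w j r - (lam / d) • μ j‖ ≤ eps / Real.sqrt d) :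
    ENNReal.ofReal (1 - 2 * k * (d : ℝ) ^ (-(Real.log d) / 2) -
        2 * (d : ℝ) ^ (-(Real.log d))) ≤
      (((k : ENNReal)⁻¹ • (Measure.count : Measure (Fin k))).prod (stdGaussian d))
        {p : Fin k × EuclideanSpace ℝ (Fin d) |
          ∀ ρ : EuclideanSpace ℝ (Fin d), ‖ρ‖ ≤ Real.sqrt d / 10 →
            sgn (FbinaryClass w s (μ p.1 + p.2 + ρ)) = s p.1} := by
  have hd0 : 0 < d := by omega
  have hnoise : √d * log d ≤ d / 10 := by
    nlinarith [sq_sqrt (Nat.cast_nonneg d : (0 : ℝ) ≤ d), sqrt_nonneg (d : ℝ)]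
  have hgood : Set.univ ×ˢ typicalNoise μ ⊆
      {p : Fin k × EuclideanSpace ℝ (Fin d) | ∀ ρ : EuclideanSpace ℝ (Fin d),
        ‖ρ‖ ≤ √d / 10 → sgn (FbinaryClass w s (μ p.1 + p.2 + ρ)) = s p.1} := by
    rintro ⟨J, ξ⟩ ⟨-, hξμ, hξ⟩ ρ hρ
    exact sgn_FbinaryClass_eq_of_small_noise w hd0 hh hnorm horth hs heps
      (by linarith [log_natCast_nonneg k]) hw (fun j => (hξμ j).trans hnoise) hξ J hρ
  calc ENNReal.ofReal _
      ≤ stdGaussian d (typicalNoise μ) := by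
        rw [← ofReal_measureReal]
        exact ENNReal.ofReal_le_ofReal
          (one_sub_le_stdGaussian_real_typicalNoise hd0 hlog μ hnorm)
    _ = _ := (smul_count_prod_univ_prod (k := k) (by omega) _ _).symm
    _ ≤ _ := measure_mono hgood
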